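/- Fix integers n ≥ 2 and r−1 ≥ 1. Let λ, λ' ∈ ℤ^n satisfy: the (r−1)-quotients of λ and λ' are equal, ρ(λ) = ρ(λ'), σ(λ) = σ(λ'), and λ_i ≡ λ'_i (mod r−1) for all 1 ≤ i ≤ n. Then λ = λ'. -/

import Mathlib

open scoped Classical

namespace CCnDAHA

variable {n : ℕ}




/-- σ(λ)_i = +1 if λ_i ≥ 0, −1 otherwise. -/
def sgn (lam : Fin n → ℤ) (i : Fin n) : ℤ := if 0 ≤ lam i then 1 else -1

/-- `Prec lam i j` : index `i` strictly precedes `j` in the ordering i_1,…,i_n. -/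
def Prec (lam : Fin n → ℤ) (i j : Fin n) : Prop :=
  |lam j| < |lam i| ∨
    (|lam i| = |lam j| ∧
      ((0 ≤ lam i ∧ lam j < 0) ∨
       (0 ≤ lam i ∧ 0 ≤ lam j ∧ i < j) ∨
       (lam i < 0 ∧ lam j < 0 ∧ j < i)))

/-- 0-based position of index `i` in the ordering i_1,…,i_n (position m−1). -/
noncomputable def posOf (lam : Fin n → ℤ) (i : Fin n) : ℕ :=
  (Finset.univ.filter (fun j => Prec lam j i)).card

/-- ρ(λ)_i = σ(λ)_i · (n − m) where i = i_m. -/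
noncomputable def rho (lam : Fin n → ℤ) (i : Fin n) : ℤ :=
  sgn lam i * ((n : ℤ) - 1 - (posOf lam i : ℤ))

/-- (a,b)-neighborhood. -/
noncomputable def IsNbhd (a b : ℤ) (lam : Fin n → ℤ) (i j : Fin n) : Prop :=
  |rho lam i| - |rho lam j| = a - 1 ∧
  |lam i| - |lam j| ≤ b ∧
  (|lam i| - |lam j| = b →
    ((0 ≤ lam i ∧ 0 ≤ lam j ∧ j < i) ∨
     (lam i < 0 ∧ lam j < 0 ∧ i < j) ∨
     (lam i < 0 ∧ 0 ≤ lam j)))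

/-- (a,b)-admissible: no (a,b)-neighborhood. -/
noncomputable def Admissible (a b : ℤ) (lam : Fin n → ℤ) : Prop :=
  ∀ i j, ¬ IsNbhd a b lam i j

/-- number of (a,b)-neighborhoods. -/
noncomputable def nbhdCount (a b : ℤ) (lam : Fin n → ℤ) : ℕ :=
  ((Finset.univ : Finset (Fin n × Fin n)).filter (fun p => IsNbhd a b lam p.1 p.2)).card

/-- dot action of the affine simple reflection s_i (0 ≤ i ≤ n, 1-based paper indexing). -/
noncomputable def dotAct (i : ℕ) (lam : Fin n → ℤ) : Fin n → ℤ := fun j =>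
  if i = 0 then (if (j : ℕ) = 0 then -1 - lam j else lam j)
  else if i = n then (if (j : ℕ) + 1 = n then -lam j else lam j)
  else if h1 : (j : ℕ) + 1 = i ∧ i < n then lam ⟨(j : ℕ) + 1, by omega⟩
  else if h2 : (j : ℕ) = i then lam ⟨(j : ℕ) - 1, by have := j.isLt; omega⟩
  else lam j

/-- pairing ⟨λ, α_i⟩, for 0 ≤ i ≤ n. -/
noncomputable def pairing (i : ℕ) (lam : Fin n → ℤ) : ℤ :=
  if hn : n = 0 then 0
  else if i = 0 then -2 * lam ⟨0, by omega⟩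
  else if i = n then 2 * lam ⟨n - 1, by omega⟩
  else lam ⟨(i - 1) % n, Nat.mod_lt _ (by omega)⟩ - lam ⟨i % n, Nat.mod_lt _ (by omega)⟩

/-- partial sum λ_1 + ⋯ + λ_j. -/
def psum (lam : Fin n → ℤ) (j : Fin n) : ℤ :=
  ∑ i ∈ Finset.univ.filter (fun i => i ≤ j), lam i

/-- dominance order: μ ≤ λ. -/
def DomLE (mu lam : Fin n → ℤ) : Prop := ∀ j, psum mu j ≤ psum lam j

/-- λ⁺ : the weakly decreasing rearrangement of (|λ_1|,…,|λ_n|). -/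
noncomputable def lamPlus (lam : Fin n → ℤ) : Fin n → ℤ := fun j =>
  ((Multiset.sort (Multiset.map (fun i => |lam i|) Finset.univ.val) (· ≤ ·)).reverse).getD (j : ℕ) 0

/-- λ ≻ μ. -/
noncomputable def SuccOrd (lam mu : Fin n → ℤ) : Prop :=
  (DomLE (lamPlus mu) (lamPlus lam) ∧ lamPlus lam ≠ lamPlus mu) ∨
  (lamPlus lam = lamPlus mu ∧ DomLE mu lam ∧ lam ≠ mu)

/-- |λ_{i_m}|, with the sentinel value 0 at m = n+1. -/
noncomputable def absAt (lam : Fin n → ℤ) (m : ℕ) : ℤ :=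
  if m = n + 1 then 0
  else ∑ i ∈ Finset.univ.filter (fun i => posOf lam i + 1 = m), |lam i|

/-- σ(λ)_{i_m}, with sentinel value +1 at m = n+1. -/
noncomputable def sgAt (lam : Fin n → ℤ) (m : ℕ) : ℤ :=
  if m = n + 1 then 1
  else ∑ i ∈ Finset.univ.filter (fun i => posOf lam i + 1 = m), sgn lam i

/-- the (1-based) value of the index i_m, with sentinel value n+1 at m = n+1. -/
noncomputable def ixAt (lam : Fin n → ℤ) (m : ℕ) : ℕ :=
  if m = n + 1 then n + 1
  else ∑ i ∈ Finset.univ.filter (fun i => posOf lam i + 1 = m), ((i : ℕ) + 1)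

/-- β_m ∈ {0,1}. -/
noncomputable def betaAt (lam : Fin n → ℤ) (m : ℕ) : ℤ :=
  if (sgAt lam m = 1 ∧ sgAt lam (m + 1) = 1 ∧ ixAt lam (m + 1) < ixAt lam m) ∨
     (sgAt lam m = -1 ∧ sgAt lam (m + 1) = -1 ∧ ixAt lam m < ixAt lam (m + 1)) ∨
     (sgAt lam m = -1 ∧ sgAt lam (m + 1) = 1)
  then 1 else 0

/-- p_m = ⌊(|λ_{i_m}| − |λ_{i_{m+1}}| − β_m)/b⌋ (b plays the role of r−1). -/
noncomputable def pAt (b : ℤ) (lam : Fin n → ℤ) (m : ℕ) : ℤ :=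
  Int.fdiv (absAt lam m - absAt lam (m + 1) - betaAt lam m) b

/-- the b-quotient λ^{quot} (b plays the role of r−1): j-th entry is p_j + ⋯ + p_n
(1-based j = (j:Fin n) + 1). -/
noncomputable def quotOf (b : ℤ) (lam : Fin n → ℤ) : Fin n → ℤ := fun j =>
  ∑ m ∈ Finset.Icc ((j : ℕ) + 1) n, pAt b lam m

/-- fundamental weight ϖ_j (1-based j = (j : Fin n)+1): first j entries 1, rest 0. -/
def varpi (j : Fin n) : Fin n → ℤ := fun i => if i ≤ j then 1 else 0

/-!
Equal `ρ` and `σ` force the same ordering `i_1, …, i_n`, hence the same `β_m`. Equal quotients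
give equal `p_m`. As `σ` agrees, `|λ_i| ≡ |λ'_i| (mod r-1)`, so the numerators of `p_m` are
congruent, and a floor quotient together with the residue determines the numerator. Hence the
gaps `|λ_{i_m}| - |λ_{i_{m+1}}|` agree, and telescoping down from the sentinel `|λ_{i_{n+1}}| = 0`
gives `|λ_i| = |λ'_i|`; the common sign then recovers `λ_i`.
-/

lemma eq_of_fdiv_eq_of_dvd_sub {b x y : ℤ} (hdvd : b ∣ x - y) (h : x.fdiv b = y.fdiv b) :
    x = y := by
  obtain ⟨k, hk⟩ := hdvd
  have hfmod : x.fmod b = y.fmod b := by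
    rw [show x = y + b * k by linarith, Int.add_mul_fmod_self_left]
  calc x = x.fmod b + b * x.fdiv b := (Int.fmod_add_mul_fdiv x b).symm
    _ = y.fmod b + b * y.fdiv b := by rw [hfmod, h]
    _ = y := Int.fmod_add_mul_fdiv y b

lemma dvd_abs_sub_abs_of_nonneg_iff {b x y : ℤ} (hxy : 0 ≤ x ↔ 0 ≤ y) (h : b ∣ x - y) :
    b ∣ |x| - |y| := by
  by_cases hx : 0 ≤ x
  · rwa [abs_of_nonneg hx, abs_of_nonneg (hxy.mp hx)]
  · rw [abs_of_neg (not_le.mp hx), abs_of_neg (not_le.mp (hxy.not.mp hx)), neg_sub_neg]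
    exact (dvd_sub_comm).mp h

lemma eq_of_abs_eq_of_nonneg_iff {x y : ℤ} (hxy : 0 ≤ x ↔ 0 ≤ y) (h : |x| = |y|) : x = y := by
  rcases abs_eq_abs.mp h with h | h
  · exact h
  · omega

lemma eq_of_sum_Icc_eq {M : Type*} [AddCancelCommMonoid M] {f g : ℕ → M} {N : ℕ}
    (h : ∀ k, 1 ≤ k → k ≤ N → ∑ t ∈ Finset.Icc k N, f t = ∑ t ∈ Finset.Icc k N, g t)
    {m : ℕ} (hm : 1 ≤ m) (hmN : m ≤ N) : f m = g m := by
  have tail : ∑ t ∈ Finset.Icc (m + 1) N, f t = ∑ t ∈ Finset.Icc (m + 1) N, g t := by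
    by_cases hlt : m + 1 ≤ N
    · exact h _ (by omega) hlt
    · simp [Finset.Icc_eq_empty hlt]
  have head := h m hm hmN
  rwa [← Finset.add_sum_Ioc_eq_sum_Icc hmN, ← Finset.add_sum_Ioc_eq_sum_Icc hmN,
    ← Finset.Icc_add_one_left_eq_Ioc, tail, add_left_inj] at head

lemma eq_of_sub_succ_eq {G : Type*} [AddGroup G] {f g : ℕ → G} {a N : ℕ} (hN : f N = g N)
    (h : ∀ m, a ≤ m → m < N → f m - f (m + 1) = g m - g (m + 1)) {m : ℕ} (ham : a ≤ m)
    (hmN : m ≤ N) : f m = g m := by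
  induction hmN using Nat.decreasingInduction with
  | self => exact hN
  | of_succ k hk ih =>
    have hstep := h k ham hk
    rwa [ih (ham.trans k.le_succ), sub_left_inj] at hstep

lemma sgn_eq_sgn_iff {lam lam' : Fin n → ℤ} {i : Fin n} :
    sgn lam i = sgn lam' i ↔ (0 ≤ lam i ↔ 0 ≤ lam' i) := by
  unfold sgn; split_ifs <;> simp only [true_iff, iff_true, iff_self, *]

lemma sgn_ne_zero (lam : Fin n → ℤ) (i : Fin n) : sgn lam i ≠ 0 := by
  unfold sgn; split_ifs <;> simp

section Prec

variable (lam : Fin n → ℤ)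

lemma prec_irrefl (i : Fin n) : ¬ Prec lam i i := by
  simp only [Prec, Fin.lt_def]; omega

lemma prec_trans {i j k : Fin n} (hij : Prec lam i j) (hjk : Prec lam j k) : Prec lam i k := by
  simp only [Prec, Fin.lt_def] at hij hjk ⊢; omega

lemma prec_or_prec_of_ne {i j : Fin n} (hne : i ≠ j) : Prec lam i j ∨ Prec lam j i := by
  have hne' : (i : ℕ) ≠ j := Fin.val_ne_of_ne hne
  simp only [Prec, Fin.lt_def]; omega

lemma posOf_lt_posOf {i j : Fin n} (h : Prec lam i j) : posOf lam i < posOf lam j := by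
  refine Finset.card_lt_card ⟨fun k hk => ?_, fun hsub => ?_⟩
  · simp only [Finset.mem_filter, Finset.mem_univ, true_and] at hk ⊢
    exact prec_trans lam hk h
  · have := hsub (Finset.mem_filter.mpr ⟨Finset.mem_univ i, h⟩)
    exact prec_irrefl lam i (Finset.mem_filter.mp this).2

lemma posOf_injective : Function.Injective (posOf lam) := by
  intro i j h
  by_contra hne
  rcases prec_or_prec_of_ne lam hne with hp | hp
  · exact (posOf_lt_posOf lam hp).ne h
  · exact (posOf_lt_posOf lam hp).ne h.symm

lemma posOf_lt (i : Fin n) : posOf lam i < n := by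
  calc posOf lam i < (Finset.univ : Finset (Fin n)).card :=
        Finset.card_lt_card (Finset.filter_ssubset.mpr ⟨i, Finset.mem_univ i, prec_irrefl lam i⟩)
    _ = n := Finset.card_fin n

lemma absAt_posOf_add_one (i : Fin n) : absAt lam (posOf lam i + 1) = |lam i| := by
  have hsingle : Finset.univ.filter (fun j => posOf lam j + 1 = posOf lam i + 1) = {i} := by
    ext j
    simp [(posOf_injective lam).eq_iff]
  rw [absAt, if_neg (by have := posOf_lt lam i; omega), hsingle, Finset.sum_singleton]

end Prec

section SameShape

variable {lam lam' : Fin n → ℤ}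

lemma posOf_eq_of_rho_eq (hsg : sgn lam = sgn lam') (hrho : rho lam = rho lam') :
    posOf lam = posOf lam' := by
  funext i
  have h := congrFun hrho i
  simp only [rho, hsg] at h
  have := mul_left_cancel₀ (sgn_ne_zero lam' i) h
  omega

lemma betaAt_eq_of_posOf_eq (hsg : sgn lam = sgn lam') (hpos : posOf lam = posOf lam') :
    betaAt lam = betaAt lam' := by
  have hsgAt : sgAt lam = sgAt lam' := by funext m; simp only [sgAt, hsg, hpos]
  have hixAt : ixAt lam = ixAt lam' := by funext m; simp only [ixAt, hpos]
  funext m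
  unfold betaAt
  rw [hsgAt, hixAt]

lemma dvd_absAt_sub_absAt {b : ℤ} (hsg : sgn lam = sgn lam') (hpos : posOf lam = posOf lam')
    (hmod : ∀ i, b ∣ lam i - lam' i) (m : ℕ) : b ∣ absAt lam m - absAt lam' m := by
  unfold absAt
  split_ifs
  · simp
  · rw [hpos, ← Finset.sum_sub_distrib]
    exact Finset.dvd_sum fun i _ =>
      dvd_abs_sub_abs_of_nonneg_iff (sgn_eq_sgn_iff.mp (congrFun hsg i)) (hmod i)

lemma pAt_eq_of_quotOf_eq {b : ℤ} (hq : quotOf b lam = quotOf b lam') {m : ℕ} (hm : 1 ≤ m)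
    (hmn : m ≤ n) : pAt b lam m = pAt b lam' m := by
  refine eq_of_sum_Icc_eq (fun k hk hkn => ?_) hm hmn
  simpa [quotOf, Nat.sub_add_cancel hk] using congrFun hq ⟨k - 1, by omega⟩

lemma absAt_sub_absAt_succ_eq {b : ℤ} (hq : quotOf b lam = quotOf b lam')
    (hsg : sgn lam = sgn lam') (hpos : posOf lam = posOf lam') (hmod : ∀ i, b ∣ lam i - lam' i)
    {m : ℕ} (hm : 1 ≤ m) (hmn : m ≤ n) :
    absAt lam m - absAt lam (m + 1) = absAt lam' m - absAt lam' (m + 1) := by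
  have hbeta := betaAt_eq_of_posOf_eq hsg hpos
  have hdvd := dvd_absAt_sub_absAt hsg hpos hmod
  have hnum : absAt lam m - absAt lam (m + 1) - betaAt lam m
      - (absAt lam' m - absAt lam' (m + 1) - betaAt lam' m)
      = (absAt lam m - absAt lam' m) - (absAt lam (m + 1) - absAt lam' (m + 1)) := by
    rw [hbeta]; ring
  have := eq_of_fdiv_eq_of_dvd_sub (hnum ▸ (hdvd m).sub (hdvd (m + 1)))
    (pAt_eq_of_quotOf_eq hq hm hmn)
  rw [hbeta, sub_left_inj] at this
  exact this

end SameShape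

theorem stmt13_general (n : ℕ) (r : ℤ)
    (lam lam' : Fin n → ℤ)
    (hq : quotOf (r - 1) lam = quotOf (r - 1) lam')
    (hrho : ∀ i, rho lam i = rho lam' i)
    (hsg : ∀ i, sgn lam i = sgn lam' i)
    (hmod : ∀ i, (r - 1) ∣ (lam i - lam' i)) :
    lam = lam' := by
  have hpos := posOf_eq_of_rho_eq (funext hsg) (funext hrho)
  have habs : ∀ m, 1 ≤ m → m ≤ n + 1 → absAt lam m = absAt lam' m :=
    fun m hm hmn => eq_of_sub_succ_eq (f := absAt lam) (N := n + 1) (by simp [absAt])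
      (fun k hk hkn => absAt_sub_absAt_succ_eq hq (funext hsg) hpos hmod hk (by omega)) hm hmn
  funext i
  refine eq_of_abs_eq_of_nonneg_iff (sgn_eq_sgn_iff.mp (hsg i)) ?_
  rw [← absAt_posOf_add_one, ← absAt_posOf_add_one, ← hpos]
  exact habs _ (by omega) (by have := posOf_lt lam i; omega)

/-- two elements with the same (r−1)-quotient, the same ρ and σ, and
congruent entries mod r−1 are equal. -/
theorem stmt13 (n : ℕ) (hn : 2 ≤ n) (r : ℤ) (hr : 1 ≤ r - 1)
    (lam lam' : Fin n → ℤ)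
    (hq : quotOf (r - 1) lam = quotOf (r - 1) lam')
    (hrho : ∀ i, rho lam i = rho lam' i)
    (hsg : ∀ i, sgn lam i = sgn lam' i)
    (hmod : ∀ i, (r - 1) ∣ (lam i - lam' i)) :
    lam = lam' :=
  stmt13_general n r lam lam' hq hrho hsg hmod

end CCnDAHA
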